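/- For all natural numbers r ≥ 1 and 0 ≤ j ≤ r, the polynomial α η_j ψ_{r−j} ζ_{r−j} lies in the ideal J_r of ℂ[α,β,γ]. -/

import Mathlib

open MvPolynomial

/-- ζ_k ∈ ℂ[α,β,γ] (variables: X 0 = α, X 1 = β, X 2 = γ). -/
noncomputable def zeta : ℕ → MvPolynomial (Fin 3) ℂ
  | 0 => 1
  | 1 => X 0
  | 2 => X 0 * zeta 1 + (X 1 - C 8) * zeta 0
  | (n + 3) =>
      X 0 * zeta (n + 2)
        + C (((n : ℂ) + 2) ^ 2) * (X 1 + C ((-1) ^ (n + 2) * 8)) * zeta (n + 1)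
        + C (2 * ((n : ℂ) + 2) * ((n : ℂ) + 1)) * X 2 * zeta n

/-- J_g = (ζ_g, ζ_{g+1}, ζ_{g+2}) ⊆ ℂ[α,β,γ]. -/
noncomputable def J (g : ℕ) : Ideal (MvPolynomial (Fin 3) ℂ) :=
  Ideal.span {zeta g, zeta (g + 1), zeta (g + 2)}

/-- β₋ = β − 8. -/
noncomputable def betaM : MvPolynomial (Fin 3) ℂ := X 1 - C 8

/-- β₊ = β + 8. -/
noncomputable def betaP : MvPolynomial (Fin 3) ℂ := X 1 + C 8

/-- ψ_r = β₋^{⌊r/2⌋} β₊^{⌈r/2⌉}. -/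
noncomputable def psi (r : ℕ) : MvPolynomial (Fin 3) ℂ :=
  betaM ^ (r / 2) * betaP ^ ((r + 1) / 2)

/-- η_j = β₋^{j−1} β₊^{j−1} for j ≥ 1 (so η_1 = 1), and η_0 = 1. -/
noncomputable def eta : ℕ → MvPolynomial (Fin 3) ℂ
  | 0 => 1
  | (m + 1) => betaM ^ m * betaP ^ m

/-!
Put `B_n = β - (-1)^n 8`, so that `(n+1)² B_n ζ_n = ζ_{n+2} - α ζ_{n+1} - 2(n+1)n γ ζ_{n-1}` and
`ψ_{p+1} = B_{p+1} ψ_p`. Solving the recurrence for its `γ`-term and descending from the generators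
`ζ_r, ζ_{r+1}, ζ_{r+2}` gives `γ^s ζ_n ∈ J_r` whenever `n + s ≥ r`.

Since `η_{j+1} ψ_n = ψ_{n+2j}`, the theorem is the case `s = 0` of `α ψ_p γ^s ζ_n ∈ J_r` for
`p + n + 2s + 2 ≥ 2r`, proved by induction on `p`. In the extremal case `p + 1 ≡ n (mod 2)`, hence
`B_{p+1} = B_n`, and the recurrence replaces `B_n ζ_n` by `ζ_{n+2}`, `α ζ_{n+1}` and `γ ζ_{n-1}`,
each of which is covered by the statement for `p`.
-/

theorem MvPolynomial.mem_of_C_mul_mem {σ K : Type*} [Field K] {I : Ideal (MvPolynomial σ K)}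
    {c : K} (hc : c ≠ 0) {p : MvPolynomial σ K} (h : C c * p ∈ I) : p ∈ I :=
  (I.unit_mul_mem_iff_mem (hc.isUnit.map C)).mp h

/-- `B_n = β - (-1)^n 8`, the factor of `ζ_n` in the recurrence for `ζ_{n+2}`. -/
noncomputable def betaAlt (n : ℕ) : MvPolynomial (Fin 3) ℂ := if Even n then betaM else betaP

theorem betaAlt_eq_of_mod_two_eq {m n : ℕ} (h : m % 2 = n % 2) : betaAlt m = betaAlt n := by
  simp only [betaAlt, Nat.even_iff, h]

theorem betaAlt_eq (n : ℕ) : betaAlt n = X 1 + C ((-1) ^ (n + 1) * 8) := by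
  rcases Nat.even_or_odd n with hn | hn
  · simp [betaAlt, hn, hn.add_one.neg_one_pow, betaM, sub_eq_add_neg]
  · simp [betaAlt, Nat.not_even_iff_odd.mpr hn, hn.add_one.neg_one_pow, betaP]

/-- At `n = 0` the last term vanishes, so the truncated `n - 1` is harmless. -/
theorem zeta_add_two (n : ℕ) :
    zeta (n + 2) = X 0 * zeta (n + 1) + C (((n : ℂ) + 1) ^ 2) * betaAlt n * zeta n
      + C (2 * ((n : ℂ) + 1) * n) * X 2 * zeta (n - 1) := by
  rcases n with _ | m
  · simp [zeta, betaAlt, betaM]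
  · show zeta (m + 3) = _
    rw [zeta, betaAlt_eq, add_tsub_cancel_right]
    push_cast
    ring_nf

theorem psi_succ (n : ℕ) : psi (n + 1) = betaAlt (n + 1) * psi n := by
  rcases Nat.even_or_odd' n with ⟨k, rfl | rfl⟩
  · have hk : ¬Even (2 * k + 1) := Nat.not_even_iff_odd.mpr (odd_two_mul_add_one k)
    simp only [psi, betaAlt, hk, if_false]
    rw [show (2 * k + 1) / 2 = k by omega, show (2 * k + 1 + 1) / 2 = k + 1 by omega,
      show 2 * k / 2 = k by omega, pow_succ]
    ring
  · have hk : Even (2 * k + 1 + 1) := ⟨k + 1, by ring⟩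
    simp only [psi, betaAlt, hk, if_true]
    rw [show (2 * k + 1 + 1) / 2 = k + 1 by omega, show (2 * k + 1 + 1 + 1) / 2 = k + 1 by omega,
      show (2 * k + 1) / 2 = k by omega, pow_succ]
    ring

theorem psi_add_two_mul (n q : ℕ) : psi (n + 2 * q) = (betaM * betaP) ^ q * psi n := by
  have h₁ : (n + 2 * q) / 2 = n / 2 + q := by omega
  have h₂ : (n + 2 * q + 1) / 2 = (n + 1) / 2 + q := by omega
  rw [psi, psi, h₁, h₂, pow_add, pow_add, mul_pow]
  ring

theorem eta_succ_mul_psi (q n : ℕ) : eta (q + 1) * psi n = psi (n + 2 * q) := by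
  rw [psi_add_two_mul, eta, mul_pow]

theorem zeta_mem_J {r n : ℕ} (h₁ : r ≤ n) (h₂ : n ≤ r + 2) : zeta n ∈ J r := by
  obtain ⟨k, rfl⟩ := Nat.exists_eq_add_of_le h₁
  have hk : k ≤ 2 := by omega
  apply Ideal.subset_span
  interval_cases k <;> simp

theorem gamma_pow_mul_zeta_mem_J {r : ℕ} (s : ℕ) {n : ℕ} (h₁ : r ≤ n + s) (h₂ : n ≤ r + 2) :
    X 2 ^ s * zeta n ∈ J r := by
  induction s generalizing n with
  | zero => simpa using zeta_mem_J h₁ h₂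
  | succ s ih =>
    rcases le_or_gt r n with hn | hn
    · exact (J r).mul_mem_left _ (zeta_mem_J hn h₂)
    refine mem_of_C_mul_mem (c := 2 * ((n : ℂ) + 2) * (n + 1)) (by norm_cast) ?_
    have h3 := ih (n := n + 3) (by omega) (by omega)
    have h2 := ih (n := n + 2) (by omega) (by omega)
    have h1 := ih (n := n + 1) (by omega) (by omega)
    convert sub_mem (sub_mem h3 ((J r).mul_mem_left (X 0) h2))
      ((J r).mul_mem_left (C (((n : ℂ) + 2) ^ 2) * betaAlt (n + 1)) h1) using 1
    rw [zeta_add_two (n + 1), add_tsub_cancel_right]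
    simp only [map_mul, map_add, map_pow, map_natCast, map_one, map_ofNat, Nat.cast_add, Nat.cast_one]
    ring

theorem alpha_mul_psi_mul_gamma_pow_mul_zeta_mem_J {r : ℕ} (p : ℕ) {n s : ℕ} (h₁ : n ≤ r + 2)
    (h₂ : 2 * r ≤ p + n + 2 * s + 2) : X 0 * psi p * (X 2 ^ s * zeta n) ∈ J r := by
  induction p generalizing n s with
  | zero =>
    rcases le_or_gt r (n + s) with hns | hns
    · exact (J r).mul_mem_left _ (gamma_pow_mul_zeta_mem_J s hns h₁)
    obtain ⟨rfl, rfl⟩ : n = 0 ∧ r = s + 1 := by omega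
    simpa [psi, zeta, mul_comm] using
      gamma_pow_mul_zeta_mem_J (r := s + 1) s (n := 1) (by omega) (by omega)
  | succ p ih =>
    rcases le_or_gt r (n + s) with hns | hns
    · exact (J r).mul_mem_left _ (gamma_pow_mul_zeta_mem_J s hns h₁)
    by_cases hp : 2 * r ≤ p + n + 2 * s + 2
    · convert (J r).mul_mem_left (betaAlt (p + 1)) (ih h₁ hp) using 1
      rw [psi_succ]
      ring
    have hB : betaAlt (p + 1) = betaAlt n := betaAlt_eq_of_mod_two_eq (by omega)
    refine mem_of_C_mul_mem (c := ((n : ℂ) + 1) ^ 2) (pow_ne_zero _ (Nat.cast_add_one_ne_zero n)) ?_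
    have h2 := ih (n := n + 2) (s := s) (by omega) (by omega)
    have h1 := ih (n := n + 1) (s := s) (by omega) (by omega)
    have h0 := ih (n := n - 1) (s := s + 1) (by omega) (by omega)
    convert sub_mem (sub_mem h2 ((J r).mul_mem_left (X 0) h1))
      ((J r).mul_mem_left (C (2 * ((n : ℂ) + 1) * n)) h0) using 1
    rw [psi_succ, hB, zeta_add_two n]
    ring

theorem alpha_eta_psi_zeta_mem_general (r j : ℕ) :
    X 0 * eta j * psi (r - j) * zeta (r - j) ∈ J r := by
  rcases j with _ | q
  · simpa [eta, mul_assoc] using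
      alpha_mul_psi_mul_gamma_pow_mul_zeta_mem_J (r := r) (p := r) (n := r) (s := 0) (by omega) (by omega)
  · rw [mul_assoc (X 0), eta_succ_mul_psi]
    simpa [mul_assoc] using alpha_mul_psi_mul_gamma_pow_mul_zeta_mem_J (r - (q + 1) + 2 * q)
      (r := r) (n := r - (q + 1)) (s := 0) (by omega) (by omega)

/-- For all r ≥ 1 and 0 ≤ j ≤ r, α η_j ψ_{r−j} ζ_{r−j} ∈ J_r. -/
theorem alpha_eta_psi_zeta_mem (r j : ℕ) (hr : 1 ≤ r) (hj : j ≤ r) :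
    X 0 * eta j * psi (r - j) * zeta (r - j) ∈ J r :=
  alpha_eta_psi_zeta_mem_general r j
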